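/- arXiv:math/0612523 — 3 statements merged into one kernel-verified Lean document; each statement's English description precedes it below -/
import Mathlib

section
/- Let Y and Z be identically distributed square-integrable real random variables. Then Var(2Z - Y) ≥ Var(Y), with equality if and only if Y = Z almost surely. -/
/-!
Put `D = Y - Z`. Since `Y` and `Z` have the same variance, `Var(2Z - Y) = Var(Y - 2D)` equals
`Var Y + 2 Var D`, and `Var D = 0` forces `D` to be a.s. equal to its mean, which is `0` because
`Y` and `Z` have the same mean.
-/

open MeasureTheory ProbabilityTheory

section

variable {Ω : Type*} [MeasurableSpace Ω] {μ : Measure Ω} {X Y : Ω → ℝ}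

/- Writing `D = X - Y`, equal variances give `cov[X, D] = Var[D] / 2`, which makes the
cross term of `Var[X - t D]` equal to `-t Var[D]`. -/
lemma variance_sub_smul_sub_of_variance_eq [IsFiniteMeasure μ] (hX : MemLp X 2 μ)
    (hY : MemLp Y 2 μ) (hXY : Var[X; μ] = Var[Y; μ]) (t : ℝ) :
    Var[fun ω ↦ X ω - t * (X ω - Y ω); μ] = Var[X; μ] + (t ^ 2 - t) * Var[X - Y; μ] := by
  have hcov : cov[X, fun ω ↦ t * (X ω - Y ω); μ] = t * (Var[X; μ] - cov[X, Y; μ]) := by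
    rw [covariance_const_mul_right, covariance_fun_sub_right hX hX hY,
      covariance_self hX.aemeasurable]
  have hD : MemLp (fun ω ↦ t * (X ω - Y ω)) 2 μ := (hX.sub hY).const_mul t
  rw [variance_fun_sub hX hD, hcov, variance_const_mul,
    variance_fun_sub hX hY, variance_sub hX hY, hXY]
  ring

lemma variance_sub_eq_zero_iff [IsProbabilityMeasure μ] (hX : MemLp X 2 μ) (hY : MemLp Y 2 μ)
    (hXY : μ[X] = μ[Y]) : Var[X - Y; μ] = 0 ↔ X =ᵐ[μ] Y := by
  refine ⟨fun h ↦ ?_, fun h ↦ ?_⟩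
  · have hmean : μ[X - Y] = 0 := by
      rw [integral_sub' (hX.integrable one_le_two) (hY.integrable one_le_two), hXY, sub_self]
    filter_upwards [ae_eq_integral_of_variance_eq_zero (hX.sub hY) h] with ω hω
    rw [hmean, Pi.sub_apply, sub_eq_zero] at hω
    exact hω
  · rw [variance_congr (h.sub_eq : X - Y =ᵐ[μ] 0), variance_zero]

end

theorem stmt_7_general {Ω : Type*} [MeasurableSpace Ω] (P : Measure Ω) [IsProbabilityMeasure P]
    (Y Z : Ω → ℝ)
    (hY2 : MemLp Y 2 P)
    (hid : IdentDistrib Y Z P P) :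
    variance Y P ≤ variance (fun ω => 2 * Z ω - Y ω) P
    ∧ (variance (fun ω => 2 * Z ω - Y ω) P = variance Y P ↔ Y =ᵐ[P] Z) := by
  have hZ2 : MemLp Z 2 P := hid.memLp_snd hY2
  have key : variance (fun ω => 2 * Z ω - Y ω) P = variance Y P + 2 * variance (Y - Z) P := by
    convert variance_sub_smul_sub_of_variance_eq hY2 hZ2 hid.variance_eq 2 using 2
    · ext ω; ring
    · norm_num
  rw [key, ← variance_sub_eq_zero_iff hY2 hZ2 hid.integral_eq]
  exact ⟨by linarith [variance_nonneg (Y - Z) P], by simp⟩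

/-- `Var(2Z - Y) ≥ Var(Y)` for identically distributed square-integrable `Y, Z`,
with equality iff `Y = Z` a.s. -/
theorem stmt_7 {Ω : Type*} [MeasurableSpace Ω] (P : Measure Ω) [IsProbabilityMeasure P]
    (Y Z : Ω → ℝ) (hY : Measurable Y) (hZ : Measurable Z)
    (hY2 : MemLp Y 2 P) (hZ2 : MemLp Z 2 P)
    (hid : IdentDistrib Y Z P P) :
    variance Y P ≤ variance (fun ω => 2 * Z ω - Y ω) P
    ∧ (variance (fun ω => 2 * Z ω - Y ω) P = variance Y P ↔ Y =ᵐ[P] Z) :=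
  stmt_7_general P Y Z hY2 hid
end

section
/- For R ≥ 3, the minimum of α^T S α over all real symmetric positive semidefinite R×R matrices S with unit diagonal (S_{ii} = 1 for all i) equals 0, where α is the vector of Richardson-Romberg weights α_r = (-1)^(R-r) r^R/(r!(R-r)!). In particular, the all-ones matrix 𝟏𝟏^T (for which α^T(𝟏𝟏^T)α = 1) is not a minimizer. -/
open Matrix Finset
open scoped Nat

/-!
For unit vectors `u r` in a real inner product space, the Gram matrix `S r s = ⟪u r, u s⟫` is
positive semidefinite with unit diagonal and `αᵀ S α = ‖∑ α r • u r‖²`, so it suffices to find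
unit vectors in the plane `ℂ` with `∑ α r • u r = 0`. The weights sum to `1`, since the `R`-th
forward difference of `x ^ R` is `R!`. The last weight `a = R ^ R / R!` is at least `1`, the one
before it is `-b` with `b = (R - 1) ^ R / (R - 1)! > 0`, and `2 (a - b) ≤ 1` because
`(1 + 1/n) ^ n < e < 3`. Hence `a`, `b` and `1 - a + b` (the sum of all other weights) are the
side lengths of a triangle, and the unit vectors along its sides do the job.
-/

section Gram

variable {ι E : Type*} [NormedAddCommGroup E] [InnerProductSpace ℝ E]

lemma Matrix.gram_apply_self_of_norm_eq_one {v : ι → E} (hv : ∀ i, ‖v i‖ = 1) (i : ι) :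
    gram ℝ v i i = 1 := by
  simp [hv]

lemma Matrix.dotProduct_gram_mulVec_self [Fintype ι] (v : ι → E) (x : ι → ℝ) :
    x ⬝ᵥ gram ℝ v *ᵥ x = ‖∑ i, x i • v i‖ ^ 2 := by
  simpa [real_inner_self_eq_norm_sq] using star_dotProduct_gram_mulVec v x x

end Gram

lemma Complex.exists_norm_eq_one_norm_mul_add_eq {p q t : ℝ} (hq : 0 < q) (ht : 0 < t)
    (h₁ : |q - t| ≤ p) (h₂ : p ≤ q + t) : ∃ z : ℂ, ‖z‖ = 1 ∧ ‖q * z + t‖ = p := by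
  set c := (p ^ 2 - q ^ 2 - t ^ 2) / (2 * q * t)
  have hp : 0 ≤ p := (abs_nonneg _).trans h₁
  have hc : c ^ 2 ≤ 1 := by
    have hlow : (q - t) ^ 2 ≤ p ^ 2 := by
      simpa only [sq_abs] using pow_le_pow_left₀ (abs_nonneg _) h₁ 2
    have hupp : p ^ 2 ≤ (q + t) ^ 2 := pow_le_pow_left₀ hp h₂ 2
    rw [sq_le_one_iff_abs_le_one, abs_le, le_div_iff₀ (by positivity), div_le_iff₀ (by positivity)]
    constructor <;> nlinarith
  set s := Real.sqrt (1 - c ^ 2)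
  have hs : s ^ 2 = 1 - c ^ 2 := Real.sq_sqrt (by linarith)
  refine ⟨⟨c, s⟩, ?_, ?_⟩
  · rw [Complex.norm_def, Real.sqrt_eq_one, Complex.normSq_mk]
    linear_combination hs
  · have hct : 2 * q * t * c = p ^ 2 - q ^ 2 - t ^ 2 := mul_div_cancel₀ _ (by positivity)
    rw [← sq_eq_sq₀ (norm_nonneg _) hp, Complex.sq_norm, Complex.normSq_apply]
    simp only [Complex.add_re, Complex.add_im, Complex.mul_re, Complex.mul_im, Complex.ofReal_re,
      Complex.ofReal_im]
    linear_combination q ^ 2 * hs + hct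

lemma Complex.exists_norm_eq_one_mul_add_mul_add_eq_zero {p q t : ℝ} (hp : 0 < p) (hq : 0 < q)
    (ht : 0 < t) (h₁ : p ≤ q + t) (h₂ : q ≤ p + t) (h₃ : t ≤ p + q) :
    ∃ u v : ℂ, ‖u‖ = 1 ∧ ‖v‖ = 1 ∧ p * u + q * v + t = 0 := by
  obtain ⟨z, hz, hqz⟩ := exists_norm_eq_one_norm_mul_add_eq hq ht
    (abs_sub_le_iff.2 ⟨by linarith, by linarith⟩) h₁
  refine ⟨-(q * z + t) / p, z, ?_, hz, ?_⟩
  · rw [norm_div, norm_neg, hqz, Complex.norm_real, Real.norm_of_nonneg hp.le, div_self hp.ne']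
  · have hp' : (p : ℂ) ≠ 0 := by exact_mod_cast hp.ne'
    rw [mul_div_cancel₀ _ hp']
    ring

theorem exists_posSemidef_diag_eq_one_dotProduct_mulVec_eq_zero {ι : Type*} [Fintype ι]
    [DecidableEq ι] {α : ι → ℝ} (hα : ∑ k, α k = 1) {i j : ι} (hij : i ≠ j)
    (hi : 1 ≤ 2 * α i) (hj : α j < 0) (hle : 2 * (α i + α j) ≤ 1) :
    ∃ S : Matrix ι ι ℝ, S.PosSemidef ∧ (∀ k, S k k = 1) ∧ α ⬝ᵥ S *ᵥ α = 0 := by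
  obtain ⟨u, v, hu, hv, huv⟩ := Complex.exists_norm_eq_one_mul_add_mul_add_eq_zero
    (p := α i) (q := -α j) (t := 1 - α i - α j) (by linarith) (by linarith) (by linarith)
    (by linarith) (by linarith) (by linarith)
  -- all other weights get the vector `1`: together they form the third side, `1 - α i - α j`
  set w : ι → ℂ := fun k ↦
    1 + (Pi.single i (u - 1) : ι → ℂ) k + (Pi.single j (-v - 1) : ι → ℂ) k
  have hw : ∀ k, ‖w k‖ = 1 := by
    intro k
    simp only [w, Pi.single_apply]
    split_ifs <;> simp_all
  have hsum : ∑ k, α k • w k = 0 := by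
    simp only [w, smul_add, sum_add_distrib]
    rw [← sum_smul, hα, Fintype.sum_eq_single i fun k hk ↦ by simp [hk],
      Fintype.sum_eq_single j fun k hk ↦ by simp [hk]]
    simp only [Pi.single_eq_same, Complex.real_smul]
    push_cast at huv ⊢
    linear_combination huv
  refine ⟨gram ℝ w, posSemidef_gram ℝ w, gram_apply_self_of_norm_eq_one hw, ?_⟩
  rw [dotProduct_gram_mulVec_self, hsum, norm_zero, sq, zero_mul]

lemma succ_pow_le_pow_succ {n : ℕ} (hn : 3 ≤ n) : ((n : ℝ) + 1) ^ n ≤ (n : ℝ) ^ (n + 1) := by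
  have hn' : (3 : ℝ) ≤ n := by exact_mod_cast hn
  have hn0 : (n : ℝ) ≠ 0 := by positivity
  calc ((n : ℝ) + 1) ^ n = (1 + (n : ℝ)⁻¹) ^ n * (n : ℝ) ^ n := by
        rw [← mul_pow, add_mul, one_mul, inv_mul_cancel₀ hn0, add_comm]
    _ ≤ 3 * (n : ℝ) ^ n := by
        gcongr
        exact Real.one_add_inv_pow_le_exp.trans Real.exp_one_lt_three.le
    _ ≤ (n : ℝ) ^ (n + 1) := by
        rw [pow_succ']
        gcongr

noncomputable def richardsonWeight (R r : ℕ) : ℝ :=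
  (-1) ^ (R - r) * (r : ℝ) ^ R / (r ! * (R - r)!)

lemma sum_range_richardsonWeight (R : ℕ) : ∑ r ∈ range (R + 1), richardsonWeight R r = 1 := by
  have h := fwdDiff_iter_eq_sum_shift (h := (1 : ℝ)) (fun x ↦ x ^ R) R 0
  rw [fwdDiff_iter_eq_factorial] at h
  have hR : (R ! : ℝ) ≠ 0 := by positivity
  simp only [Pi.natCast_apply, zero_add, nsmul_one, zsmul_eq_mul] at h
  push_cast at h
  rw [← div_self hR]
  nth_rw 1 [h]
  rw [sum_div]
  refine sum_congr rfl fun r hr ↦ ?_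
  rw [richardsonWeight, Nat.cast_choose ℝ (Nat.lt_succ_iff.1 (mem_range.1 hr))]
  field_simp

lemma richardsonWeight_zero {R : ℕ} (hR : R ≠ 0) : richardsonWeight R 0 = 0 := by
  simp [richardsonWeight, hR]

lemma sum_range_richardsonWeight_succ {R : ℕ} (hR : R ≠ 0) :
    ∑ r ∈ range R, richardsonWeight R (r + 1) = 1 := by
  rw [← sum_range_richardsonWeight R, sum_range_succ' _ R, richardsonWeight_zero hR, add_zero]

lemma richardsonWeight_self (R : ℕ) : richardsonWeight R R = R ^ R / R ! := by
  simp [richardsonWeight]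

lemma richardsonWeight_succ_self (n : ℕ) : richardsonWeight (n + 1) n = -(n ^ (n + 1) / n !) := by
  simp [richardsonWeight, neg_div]

lemma one_le_richardsonWeight_self (R : ℕ) : 1 ≤ richardsonWeight R R := by
  rw [richardsonWeight_self, one_le_div (by positivity)]
  exact_mod_cast Nat.factorial_le_pow R

lemma richardsonWeight_succ_self_neg {n : ℕ} (hn : n ≠ 0) : richardsonWeight (n + 1) n < 0 := by
  rw [richardsonWeight_succ_self, neg_lt_zero]
  positivity

lemma two_mul_richardsonWeight_add_le {n : ℕ} (hn : 2 ≤ n) :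
    2 * (richardsonWeight (n + 1) (n + 1) + richardsonWeight (n + 1) n) ≤ 1 := by
  have hlast : richardsonWeight (n + 1) (n + 1) = ((n : ℝ) + 1) ^ n / n ! := by
    rw [richardsonWeight_self, Nat.factorial_succ]
    push_cast
    field_simp
    ring
  rw [hlast, richardsonWeight_succ_self, ← sub_eq_add_neg, ← sub_div]
  obtain rfl | hn := hn.eq_or_lt
  · norm_num [Nat.factorial]
  · have := div_nonpos_of_nonpos_of_nonneg (sub_nonpos.2 (succ_pow_le_pow_succ hn))
      (Nat.cast_nonneg (α := ℝ) n !)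
    linarith

/-- For `R ≥ 3`, the minimum of `αᵀ S α` over symmetric PSD matrices with unit
diagonal is `0`; in particular the all-ones matrix (where the value is `1`)
is not a minimizer. -/
theorem stmt_11 (R : ℕ) (hR : 3 ≤ R)
    (α : Fin R → ℝ)
    (hα : ∀ r : Fin R, α r =
      (-1 : ℝ) ^ (R - ((r : ℕ) + 1)) * ((r : ℕ) + 1 : ℝ) ^ R /
        (Nat.factorial ((r : ℕ) + 1) * Nat.factorial (R - ((r : ℕ) + 1)))) :
    IsLeast {x : ℝ | ∃ S : Matrix (Fin R) (Fin R) ℝ,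
        S.PosSemidef ∧ (∀ i, S i i = 1) ∧ x = α ⬝ᵥ S.mulVec α} 0
    ∧ α ⬝ᵥ (Matrix.of (fun _ _ => (1 : ℝ)) : Matrix (Fin R) (Fin R) ℝ).mulVec α = 1 := by
  obtain ⟨n, rfl⟩ : ∃ n, R = n + 2 := ⟨R - 2, by omega⟩
  have hα' : ∀ r : Fin (n + 2), α r = richardsonWeight (n + 2) (r + 1) := fun r ↦ by
    rw [hα, richardsonWeight]
    push_cast
    rfl
  have hsum : ∑ r, α r = 1 := by
    simp only [hα']
    exact (Fin.sum_univ_eq_sum_range (fun r ↦ richardsonWeight (n + 2) (r + 1)) _).trans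
      (sum_range_richardsonWeight_succ (by omega))
  have hlast : α (Fin.last (n + 1)) = richardsonWeight (n + 2) (n + 2) := by simp [hα']
  have hprev : α (Fin.last n).castSucc = richardsonWeight (n + 2) (n + 1) := by simp [hα']
  obtain ⟨S, hS, hdiag, hzero⟩ := exists_posSemidef_diag_eq_one_dotProduct_mulVec_eq_zero hsum
    (Fin.castSucc_lt_last (Fin.last n)).ne'
    (by linarith [hlast ▸ one_le_richardsonWeight_self (n + 2)])
    (hprev ▸ richardsonWeight_succ_self_neg (by omega))
    (hlast ▸ hprev ▸ two_mul_richardsonWeight_add_le (by omega))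
  refine ⟨⟨⟨S, hS, hdiag, hzero.symm⟩, ?_⟩, ?_⟩
  · rintro x ⟨T, hT, -, rfl⟩
    simpa using hT.dotProduct_mulVec_nonneg α
  · simp [dotProduct, mulVec, hsum]
end

section
/- Let R ≥ 4 and let α_r = (-1)^(R-r) r^R/(r!(R-r)!). Set I⁺ = {r : α_r > 0}, I⁻ = {r : α_r < 0}, and θ_i = α_i / ∑_{j∈I⁻} |α_j| for i ∈ I⁺. Then ∑_{i∈I⁺} θ_i > 1 and ∑_{i∈I⁺} θ_i² < 1. -/
open Finset

open fwdDiff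

private lemma fd_step (m : ℕ) : fwdDiff (1:ℝ) (fun x : ℝ ↦ x ^ m) =
    ∑ j ∈ Finset.range m, (m.choose j : ℝ) • (fun x : ℝ ↦ x ^ j) := by
  ext x
  simp only [fwdDiff, Finset.sum_apply, Pi.smul_apply, smul_eq_mul]
  rw [add_pow, Finset.sum_range_succ]
  simp [mul_comm]

private lemma fd_zero_of_lt : ∀ n : ℕ, ∀ m < n,
    (fwdDiff (1:ℝ))^[n] (fun x : ℝ ↦ x ^ m) = fun _ ↦ 0 := by
  intro n
  induction n with
  | zero => omega
  | succ n IH =>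
    intro m hm
    rw [Function.iterate_succ_apply, fd_step, fwdDiff_iter_finset_sum]
    ext x
    rw [Finset.sum_apply]
    apply Finset.sum_eq_zero
    intro j hj
    rw [fwdDiff_iter_const_smul, IH j (by simp at hj; omega)]
    simp

private lemma fd_diag : ∀ n : ℕ, (fwdDiff (1:ℝ))^[n] (fun x : ℝ ↦ x ^ n) =
    fun _ ↦ (n.factorial : ℝ) := by
  intro n
  induction n with
  | zero => ext x; simp
  | succ n IH =>
    rw [Function.iterate_succ_apply, fd_step, fwdDiff_iter_finset_sum, Finset.sum_range_succ]
    have h0 : ∑ j ∈ Finset.range n,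
        (fwdDiff (1:ℝ))^[n] (((n+1).choose j : ℝ) • fun x : ℝ ↦ x ^ j) = 0 :=
      Finset.sum_eq_zero fun j hj => by
        rw [fwdDiff_iter_const_smul, fd_zero_of_lt n j (Finset.mem_range.mp hj)]
        ext x; simp
    rw [h0, zero_add, fwdDiff_iter_const_smul, IH]
    ext x
    simp [Nat.choose_succ_self_right, Nat.factorial_succ]

private lemma sum_alt (R : ℕ) :
    ∑ k ∈ Finset.range (R+1), (-1:ℝ)^(R-k) * (R.choose k) * (k:ℝ)^R = (R.factorial : ℝ) := by
  have h := fwdDiff_iter_eq_sum_shift (1:ℝ) (fun x : ℝ ↦ x ^ R) R 0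
  rw [fd_diag] at h
  simp only [zsmul_eq_mul, nsmul_eq_mul, mul_one, zero_add] at h
  rw [h]
  apply Finset.sum_congr rfl
  intro k hk
  push_cast
  ring

private lemma two_mul_fact_le : ∀ n : ℕ, 3 ≤ n → 2 * n.factorial ≤ n ^ n := by
  intro n
  induction n with
  | zero => omega
  | succ n IH =>
    intro h
    rcases Nat.lt_or_ge n 3 with h3 | h3
    · interval_cases n <;> simp [Nat.factorial] <;> omega
    · have h1 := IH h3
      have h2 : n ^ n ≤ (n+1) ^ n := Nat.pow_le_pow_left (by omega) n
      calc 2 * (n+1).factorial = (n+1) * (2 * n.factorial) := by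
            rw [Nat.factorial_succ]; ring
        _ ≤ (n+1) * (n+1) ^ n := Nat.mul_le_mul_left _ (le_trans h1 h2)
        _ = (n+1) ^ (n+1) := by rw [pow_succ]; ring


/-- For `R ≥ 4`, with `I⁺`, `I⁻` the indices of positive/negative R-R weights
and `θ_i = α_i / ∑_{j∈I⁻} |α_j|`, one has `∑_{i∈I⁺} θ_i > 1` and
`∑_{i∈I⁺} θ_i² < 1`. -/
theorem stmt_13 (R : ℕ) (hR : 4 ≤ R)
    (α : ℕ → ℝ)
    (hα : ∀ r ∈ Finset.Icc 1 R, α r =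
      (-1 : ℝ) ^ (R - r) * (r : ℝ) ^ R /
        (Nat.factorial r * Nat.factorial (R - r)))
    (Iplus Iminus : Finset ℕ)
    (hIp : Iplus = (Finset.Icc 1 R).filter (fun r => 0 < α r))
    (hIm : Iminus = (Finset.Icc 1 R).filter (fun r => α r < 0))
    (θ : ℕ → ℝ) (hθ : ∀ i ∈ Iplus, θ i = α i / ∑ j ∈ Iminus, |α j|) :
    1 < ∑ i ∈ Iplus, θ i ∧ ∑ i ∈ Iplus, θ i ^ 2 < 1 := by
  have hfactR : (0:ℝ) < R.factorial := by exact_mod_cast R.factorial_pos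
  -- Step 1: sum over Icc 1 R of α equals 1
  have hsum1 : ∑ r ∈ Finset.Icc 1 R, α r = 1 := by
    have hins : Finset.range (R+1) = insert 0 (Finset.Icc 1 R) := by
      ext x; simp [Finset.mem_Icc, Finset.mem_range]; omega
    have h0 : (0:ℕ) ∉ Finset.Icc 1 R := by simp
    have halt := sum_alt R
    rw [hins, Finset.sum_insert h0] at halt
    have hz : (-1:ℝ)^(R-0) * ((R.choose 0 : ℕ) : ℝ) * ((0:ℕ):ℝ)^R = 0 := by
      simp [zero_pow (by omega : R ≠ 0)]
    rw [hz, zero_add] at halt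
    have hterm : ∀ r ∈ Finset.Icc 1 R,
        α r * R.factorial = (-1:ℝ)^(R-r) * ((R.choose r : ℕ):ℝ) * (r:ℝ)^R := by
      intro r hr
      obtain ⟨hr1, hr2⟩ := Finset.mem_Icc.mp hr
      rw [hα r hr]
      have hd : ((r.factorial : ℝ) * ((R-r).factorial : ℝ)) ≠ 0 := by positivity
      have hc : (R.choose r * r.factorial * (R - r).factorial : ℕ) = R.factorial :=
        Nat.choose_mul_factorial_mul_factorial hr2
      field_simp
      rw [← hc]
      push_cast
      ring
    have hmul : (∑ r ∈ Finset.Icc 1 R, α r) * R.factorial = R.factorial := by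
      rw [Finset.sum_mul, Finset.sum_congr rfl hterm, halt]
    have := mul_right_cancel₀ (ne_of_gt hfactR) (by rw [hmul, one_mul] :
      (∑ r ∈ Finset.Icc 1 R, α r) * (R.factorial : ℝ) = 1 * R.factorial)
    exact this
  -- nonvanishing on Icc
  have hne : ∀ r ∈ Finset.Icc 1 R, α r ≠ 0 := by
    intro r hr
    obtain ⟨hr1, hr2⟩ := Finset.mem_Icc.mp hr
    rw [hα r hr]
    have hrpos : (0:ℝ) < (r:ℝ) := by exact_mod_cast hr1
    apply div_ne_zero
    · exact mul_ne_zero (pow_ne_zero _ (by norm_num)) (by positivity)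
    · positivity
  -- values at R, R-1, R-2
  have hvalR : 2 ≤ α R := by
    rw [hα R (Finset.mem_Icc.mpr ⟨by omega, le_refl R⟩), Nat.sub_self]
    simp only [pow_zero, one_mul, Nat.factorial_zero, Nat.cast_one, mul_one]
    rw [le_div_iff₀ hfactR]
    have h := two_mul_fact_le R (by omega)
    calc (2:ℝ) * R.factorial = ((2 * R.factorial : ℕ) : ℝ) := by push_cast; ring
      _ ≤ ((R ^ R : ℕ) : ℝ) := by exact_mod_cast h
      _ = (R:ℝ)^R := by push_cast; ring
  have hvalR2 : 2 ≤ α (R-2) := by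
    have e : R - (R-2) = 2 := by omega
    rw [hα (R-2) (Finset.mem_Icc.mpr ⟨by omega, by omega⟩), e]
    have hfac : (0:ℝ) < ((R-2).factorial : ℝ) * ((Nat.factorial 2 : ℕ) : ℝ) := by positivity
    rw [le_div_iff₀ hfac]
    have hnat : 2 * ((R-2).factorial * Nat.factorial 2) ≤ (R-2) ^ R := by
      have h1 : (R-2).factorial ≤ (R-2)^(R-2) := Nat.factorial_le_pow _
      have h4 : 2^2 ≤ (R-2)^2 := Nat.pow_le_pow_left (by omega) 2
      have hRe : R = 2 + (R - 2) := by omega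
      calc 2 * ((R-2).factorial * Nat.factorial 2) = 4 * (R-2).factorial := by
            simp [Nat.factorial]; ring
        _ ≤ (R-2)^2 * (R-2)^(R-2) := Nat.mul_le_mul (by simpa using h4) h1
        _ = (R-2)^(2 + (R-2)) := by rw [pow_add]
        _ = (R-2)^R := by rw [← hRe]
    calc (2:ℝ) * (((R-2).factorial : ℝ) * ((Nat.factorial 2 : ℕ):ℝ))
        = ((2 * ((R-2).factorial * Nat.factorial 2) : ℕ) : ℝ) := by push_cast; ring
      _ ≤ (((R-2) ^ R : ℕ) : ℝ) := by exact_mod_cast hnat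
      _ = (((R-2:ℕ)):ℝ)^R := by push_cast; ring
      _ ≤ (-1:ℝ)^2 * (((R-2:ℕ)):ℝ)^R := by norm_num
  have hnegR1 : α (R-1) < 0 := by
    have e : R - (R-1) = 1 := by omega
    rw [hα (R-1) (Finset.mem_Icc.mpr ⟨by omega, by omega⟩), e]
    have hpos : (0:ℝ) < (((R-1:ℕ)):ℝ)^R := by
      have : (0:ℝ) < ((R-1:ℕ):ℝ) := by exact_mod_cast (by omega : 0 < R - 1)
      positivity
    apply div_neg_of_neg_of_pos
    · simpa using hpos
    · positivity
  -- memberships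
  have hmemR : R ∈ Iplus := by
    rw [hIp]; exact Finset.mem_filter.mpr ⟨Finset.mem_Icc.mpr ⟨by omega, le_refl R⟩, by linarith⟩
  have hmemR2 : R - 2 ∈ Iplus := by
    rw [hIp]; exact Finset.mem_filter.mpr ⟨Finset.mem_Icc.mpr ⟨by omega, by omega⟩, by linarith⟩
  have hmemR1 : R - 1 ∈ Iminus := by
    rw [hIm]; exact Finset.mem_filter.mpr ⟨Finset.mem_Icc.mpr ⟨by omega, by omega⟩, hnegR1⟩
  -- partition
  have hsplit : ∑ r ∈ Finset.Icc 1 R, α r = ∑ i ∈ Iplus, α i + ∑ j ∈ Iminus, α j := by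
    rw [hIp, hIm]
    have : (Finset.Icc 1 R).filter (fun r => α r < 0)
        = (Finset.Icc 1 R).filter (fun r => ¬ 0 < α r) := by
      apply Finset.filter_congr
      intro r hr
      have := hne r hr
      constructor
      · intro h; exact not_lt.mpr (le_of_lt h)
      · intro h; rcases lt_trichotomy (α r) 0 with h' | h' | h'
        · exact h'
        · exact absurd h' this
        · exact absurd h' h
    rw [this]
    exact (Finset.sum_filter_add_sum_filter_not _ _ _).symm
  set K := ∑ j ∈ Iminus, |α j| with hKdef
  have hKsum : ∑ j ∈ Iminus, α j = -K := by
    rw [hKdef, ← Finset.sum_neg_distrib]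
    apply Finset.sum_congr rfl
    intro j hj
    rw [hIm] at hj
    have := (Finset.mem_filter.mp hj).2
    rw [abs_of_neg this]; ring
  have hA : ∑ i ∈ Iplus, α i = 1 + K := by
    rw [hsplit, hKsum] at hsum1; linarith
  have hKpos : 0 < K := by
    apply Finset.sum_pos' (fun j _ => abs_nonneg _)
    exact ⟨R - 1, hmemR1, abs_pos.mpr (ne_of_lt hnegR1)⟩
  have hαnonneg : ∀ i ∈ Iplus, 0 ≤ α i := by
    intro i hi; rw [hIp] at hi; exact le_of_lt (Finset.mem_filter.mp hi).2
  -- each α i ≤ (1 + K) - 2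
  have hbound : ∀ i ∈ Iplus, α i ≤ (1 + K) - 2 := by
    intro i hi
    have hRne : R ≠ R - 2 := by omega
    obtain ⟨k, hkmem, hkne, hk2⟩ : ∃ k, k ∈ Iplus ∧ k ≠ i ∧ 2 ≤ α k := by
      by_cases hiR : i = R
      · exact ⟨R - 2, hmemR2, by omega, hvalR2⟩
      · exact ⟨R, hmemR, fun h => hiR h.symm, hvalR⟩
    have hsub : ∑ j ∈ Iplus.erase i, α j = (1 + K) - α i := by
      rw [Finset.sum_erase_eq_sub hi, hA]
    have hle : α k ≤ ∑ j ∈ Iplus.erase i, α j :=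
      Finset.single_le_sum (fun j hj => hαnonneg j (Finset.mem_of_mem_erase hj))
        (Finset.mem_erase.mpr ⟨hkne, hkmem⟩)
    rw [hsub] at hle
    linarith
  -- sum of squares bound
  have hsq : ∑ i ∈ Iplus, (α i)^2 < K^2 := by
    have h1 : ∑ i ∈ Iplus, (α i)^2 ≤ ((1 + K) - 2) * (1 + K) := by
      calc ∑ i ∈ Iplus, (α i)^2 ≤ ∑ i ∈ Iplus, ((1 + K) - 2) * α i := by
            apply Finset.sum_le_sum
            intro i hi
            have h2 := hbound i hi
            have h3 := hαnonneg i hi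
            nlinarith
        _ = ((1 + K) - 2) * ∑ i ∈ Iplus, α i := by rw [Finset.mul_sum]
        _ = ((1 + K) - 2) * (1 + K) := by rw [hA]
    nlinarith
  -- conclusion
  have hθsum : ∑ i ∈ Iplus, θ i = (1 + K) / K := by
    rw [← hA, Finset.sum_div]
    exact Finset.sum_congr rfl hθ
  have hθsq : ∑ i ∈ Iplus, θ i ^ 2 = (∑ i ∈ Iplus, (α i)^2) / K^2 := by
    rw [Finset.sum_div]
    apply Finset.sum_congr rfl
    intro i hi
    rw [hθ i hi, div_pow]
  constructor
  · rw [hθsum, lt_div_iff₀ hKpos]; linarith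
  · rw [hθsq, div_lt_one (by positivity)]; exact hsq
end
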